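/- arXiv:1005.0498 — 5 statements merged into one kernel-verified Lean document; each statement's English description precedes it below -/
import Mathlib

section
/- For an infinite countable family of nonnegative real numbers (aₙ)_{n∈ℤ} with ∑_{n∈ℤ} aₙ < ∞, the following holds: inf_{k∈ℤ} ∑_{n≠k} aₙ ≥ ∑_{n∈ℤ} min(aₙ, a_{n+1}). -/
/-!
Deleting the index `k` from `ℤ` leaves a copy of `ℤ`, enumerated by `n ↦ n` for `n < k` and
`n ↦ n + 1` for `n ≥ k`. Under this re-indexing the `n`-th surviving term is `a n` or `a (n + 1)`,
so it dominates `min (a n) (a (n + 1))`, and summing termwise gives the bound for every `k`.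
-/

namespace Int

def skipEquiv (k : ℤ) : ℤ ≃ {m : ℤ // m ≠ k} where
  toFun n := ⟨if n < k then n else n + 1, by split_ifs <;> omega⟩
  invFun m := if m.1 < k then m.1 else m.1 - 1
  left_inv n := by
    by_cases h : n < k
    · simp [h]
    · simp [h]; omega
  right_inv m := by
    obtain ⟨m, hm⟩ := m
    ext
    by_cases h : m < k
    · simp [h]
    · have : ¬ m - 1 < k := by omega
      simp [h, this]

theorem skipEquiv_apply_coe (k n : ℤ) :
    (skipEquiv k n : ℤ) = if n < k then n else n + 1 := rfl

end Int

theorem Summable.min {ι : Type*} {f g : ι → ℝ} (hf : Summable f) (hg : Summable g) :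
    Summable fun i => min (f i) (g i) :=
  (hf.abs.add hg.abs).of_norm_bounded fun _ =>
    abs_min_le_max_abs_abs.trans (max_le_add_of_nonneg (abs_nonneg _) (abs_nonneg _))

theorem min_le_skipEquiv (a : ℤ → ℝ) (k n : ℤ) :
    min (a n) (a (n + 1)) ≤ a (Int.skipEquiv k n) := by
  rw [Int.skipEquiv_apply_coe]
  split_ifs
  · exact min_le_left _ _
  · exact min_le_right _ _

theorem tsum_min_succ_le_tsum_ne {a : ℤ → ℝ} (hsum : Summable a) (k : ℤ) :
    ∑' n : ℤ, min (a n) (a (n + 1)) ≤ ∑' n : {n : ℤ // n ≠ k}, a n := by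
  have hshift : Summable fun n : ℤ => a (n + 1) := hsum.comp_injective (add_left_injective 1)
  have hskip : Summable fun n : ℤ => a (Int.skipEquiv k n) :=
    (hsum.subtype _).comp_injective (Int.skipEquiv k).injective
  rw [← (Int.skipEquiv k).tsum_eq]
  exact (hsum.min hshift).tsum_le_tsum (min_le_skipEquiv a k) hskip

theorem stmt_1_general (a : ℤ → ℝ) (hsum : Summable a) :
    (⨅ k : ℤ, ∑' n : {n : ℤ // n ≠ k}, a n) ≥ ∑' n : ℤ, min (a n) (a (n + 1)) :=
  le_ciInf (tsum_min_succ_le_tsum_ne hsum)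

theorem stmt_1 (a : ℤ → ℝ) (hnn : ∀ n, 0 ≤ a n) (hsum : Summable a) :
    (⨅ k : ℤ, ∑' n : {n : ℤ // n ≠ k}, a n) ≥ ∑' n : ℤ, min (a n) (a (n + 1)) :=
  stmt_1_general a hsum
end

section
/- For M nonnegative real numbers a₀,…,a_{M−1}, min over k of the sum ∑_{n≠k} aₙ is at least ∑_{n=0}^{M−2} min(aₙ, a_{n+1}). -/
/-!
Deleting the index `k` from `0, …, M - 1` leaves the indices `skip k n` for `n < M - 1`, and
`a (skip k n)` is one of `a n`, `a (n + 1)`, hence at least their minimum.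
-/

open Finset

def skip (k n : ℕ) : ℕ := if n < k then n else n + 1

lemma skip_injective (k : ℕ) : Function.Injective (skip k) := by
  intro x y hxy
  unfold skip at hxy
  split_ifs at hxy <;> omega

lemma skip_mem_erase_range {M k n : ℕ} (hn : n < M - 1) : skip k n ∈ (range M).erase k := by
  rw [mem_erase, mem_range]
  unfold skip
  split_ifs <;> omega

lemma min_le_apply_skip {α : Type*} [LinearOrder α] (a : ℕ → α) (k n : ℕ) :
    min (a n) (a (n + 1)) ≤ a (skip k n) := by
  unfold skip
  split_ifs
  · exact min_le_left _ _
  · exact min_le_right _ _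

theorem sum_range_pred_min_le_sum_erase {α : Type*} [AddCommMonoid α] [LinearOrder α]
    [IsOrderedAddMonoid α] {a : ℕ → α} (ha : ∀ n, 0 ≤ a n) (M k : ℕ) :
    ∑ n ∈ range (M - 1), min (a n) (a (n + 1)) ≤ ∑ n ∈ (range M).erase k, a n :=
  calc ∑ n ∈ range (M - 1), min (a n) (a (n + 1))
      ≤ ∑ n ∈ range (M - 1), a (skip k n) := sum_le_sum fun n _ => min_le_apply_skip a k n
    _ = ∑ m ∈ (range (M - 1)).image (skip k), a m :=
        (sum_image fun _ _ _ _ h => skip_injective k h).symm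
    _ ≤ ∑ n ∈ (range M).erase k, a n := by
        refine sum_le_sum_of_subset_of_nonneg ?_ fun n _ _ => ha n
        rintro _ hm
        obtain ⟨n, hn, rfl⟩ := mem_image.mp hm
        exact skip_mem_erase_range (mem_range.mp hn)

theorem stmt_2 (M : ℕ) (hM : 1 ≤ M) (a : ℕ → ℝ) (hnn : ∀ n, 0 ≤ a n) :
    (⨅ k : Fin M, ∑ n ∈ (Finset.range M).erase (k : ℕ), a n) ≥
      ∑ n ∈ Finset.range (M - 1), min (a n) (a (n + 1)) := by
  have : Nonempty (Fin M) := ⟨⟨0, hM⟩⟩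
  exact le_ciInf fun k => sum_range_pred_min_le_sum_erase hnn M k
end

section
/- Let f : ℝ → ℝ be a nonnegative integrable function with ∫_ℝ f = 1 (a probability density), and let h > 0. Assume ∑_{l∈ℤ} f(φ + lh) converges for a.e. φ. Then 1 − ∫_0^h sup_{l∈ℤ} f(φ + lh) dφ ≥ ∫_ℝ min(f(φ), f(φ + h)) dφ. -/
open MeasureTheory

open Set
open scoped ENNReal

lemma periodize_aux (h : ℝ) (hh : 0 < h) (g : ℝ → ℝ≥0∞) (hg : Measurable g) :
    ∫⁻ x, g x = ∫⁻ x in Ioc (0:ℝ) h, ∑' l : ℤ, g (x + l * h) := by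
  have hmeas : ∀ l : ℤ, Measurable fun x : ℝ => g (x + l * h) :=
    fun l => hg.comp (measurable_add_const _)
  rw [lintegral_tsum (fun l => (hmeas l).aemeasurable)]
  have h1 : ∀ l : ℤ, ∫⁻ x in Ioc (0:ℝ) h, g (x + l * h)
      = ∫⁻ x in Ioc ((l:ℝ) * h) (((l + 1 : ℤ) : ℝ) * h), g x := by
    intro l
    have := (measurePreserving_add_right (volume : Measure ℝ) (l * h)).setLIntegral_comp_preimage_emb
      (measurableEmbedding_addRight _) g (Ioc ((l:ℝ) * h) (((l+1:ℤ):ℝ) * h))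
    have hset : (fun x : ℝ => x + ↑l * h) ⁻¹' Ioc ((l:ℝ)*h) (((l+1:ℤ):ℝ)*h) = Ioc 0 h := by
      ext x
      simp only [mem_preimage, mem_Ioc]
      push_cast
      constructor <;> (intro ⟨a, b⟩; constructor <;> linarith)
    rw [← this, hset]
  have hU : (⋃ l : ℤ, Ioc ((l:ℝ) * h) (((l + 1 : ℤ) : ℝ) * h)) = univ := by
    have := iUnion_Ioc_zsmul (p := h) hh
    simp only [zsmul_eq_mul] at this
    rw [← this]
  have hd : Pairwise (Function.onFun Disjoint fun l : ℤ => Ioc ((l:ℝ) * h) (((l + 1 : ℤ) : ℝ) * h)) := by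
    have := pairwise_disjoint_Ioc_add_zsmul (0:ℝ) h
    simp only [zsmul_eq_mul, zero_add] at this
    push_cast at this
    push_cast
    exact this
  rw [tsum_congr h1, ← lintegral_iUnion (fun l : ℤ => measurableSet_Ioc) hd g, hU,
    Measure.restrict_univ]

lemma exists_max_aux (a : ℤ → ℝ) (hnn : ∀ l, 0 ≤ a l) (hs : Summable a) :
    ∃ l₀, ∀ l, a l ≤ a l₀ := by
  by_cases hz : ∀ l, a l = 0
  · exact ⟨0, fun l => by rw [hz l, hz 0]⟩
  push_neg at hz
  obtain ⟨l₁, hl₁⟩ := hz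
  have hpos : 0 < a l₁ := (hnn l₁).lt_of_ne (Ne.symm hl₁)
  have hten := hs.tendsto_cofinite_zero
  have hev : ∀ᶠ l in Filter.cofinite, a l < a l₁ :=
    hten (Iio_mem_nhds hpos)
  have hfin : {l : ℤ | ¬ a l < a l₁}.Finite := hev
  have hmem : l₁ ∈ hfin.toFinset := by simp
  obtain ⟨l₀, hl₀mem, hl₀⟩ := hfin.toFinset.exists_max_image a ⟨l₁, hmem⟩
  refine ⟨l₀, fun l => ?_⟩
  by_cases hl : a l < a l₁
  · have : a l₁ ≤ a l₀ := hl₀ l₁ hmem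
    linarith
  · exact hl₀ l (by simpa using hl)

lemma pointwise_bound_aux (a : ℤ → ℝ) (hnn : ∀ l, 0 ≤ a l) (hs : Summable a) :
    ENNReal.ofReal (⨆ l : ℤ, a l) + ∑' l : ℤ, ENNReal.ofReal (min (a l) (a (l+1)))
      ≤ ∑' l : ℤ, ENNReal.ofReal (a l) := by
  obtain ⟨l₀, hl₀⟩ := exists_max_aux a hnn hs
  have hsup : (⨆ l : ℤ, a l) = a l₀ :=
    le_antisymm (ciSup_le hl₀) (le_ciSup ⟨a l₀, by rintro x ⟨l, rfl⟩; exact hl₀ l⟩ l₀)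
  set e : ℤ → ℤ := fun l => if l < l₀ then l else l + 1 with he
  have hinj : Function.Injective e := by
    intro x y hxy
    simp only [he] at hxy
    split_ifs at hxy <;> omega
  have hne : ∀ l, e l ≠ l₀ := by
    intro l; simp only [he]; split_ifs <;> omega
  set F : ℤ → ℝ≥0∞ := fun x => if x = l₀ then 0 else ENNReal.ofReal (a x) with hF
  have h1 : ∑' l : ℤ, ENNReal.ofReal (min (a l) (a (l+1))) ≤ ∑' l : ℤ, F (e l) := by
    refine ENNReal.tsum_le_tsum fun l => ?_
    have hFe : F (e l) = ENNReal.ofReal (a (e l)) := by simp [hF, hne l]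
    rw [hFe]
    refine ENNReal.ofReal_le_ofReal ?_
    simp only [he]
    split_ifs
    · exact min_le_left _ _
    · exact min_le_right _ _
  have h2 : ∑' l : ℤ, F (e l) = ∑' x : ℤ, F x := by
    refine hinj.tsum_eq fun x hx => ?_
    have hxne : x ≠ l₀ := by
      intro hxl
      apply hx
      simp [hF, hxl]
    rcases lt_or_gt_of_ne hxne with hlt | hgt
    · exact ⟨x, by simp [he, hlt]⟩
    · exact ⟨x - 1, by simp only [he]; rw [if_neg (by omega)]; ring⟩
  have h3 : ∑' l : ℤ, ENNReal.ofReal (a l)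
      = ENNReal.ofReal (a l₀) + ∑' x : ℤ, F x := by
    simp only [hF]
    rw [ENNReal.tsum_eq_add_tsum_ite l₀]
    congr 1
    exact tsum_congr fun x => by congr
  calc ENNReal.ofReal (⨆ l : ℤ, a l) + ∑' l : ℤ, ENNReal.ofReal (min (a l) (a (l+1)))
      ≤ ENNReal.ofReal (a l₀) + ∑' l : ℤ, F (e l) := by
        rw [hsup]; exact add_le_add le_rfl h1
    _ = ∑' l : ℤ, ENNReal.ofReal (a l) := by rw [h2, ← h3]

lemma ofReal_ciSup_aux (a : ℤ → ℝ) (hnn : ∀ l, 0 ≤ a l) (hs : Summable a) :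
    (⨆ l : ℤ, ENNReal.ofReal (a l)) = ENNReal.ofReal (⨆ l : ℤ, a l) := by
  obtain ⟨l₀, hl₀⟩ := exists_max_aux a hnn hs
  have hbdd : BddAbove (Set.range a) := ⟨a l₀, by rintro x ⟨l, rfl⟩; exact hl₀ l⟩
  apply le_antisymm
  · exact iSup_le fun l => ENNReal.ofReal_le_ofReal (le_ciSup hbdd l)
  · have hsup : (⨆ l : ℤ, a l) = a l₀ := le_antisymm (ciSup_le hl₀) (le_ciSup hbdd l₀)
    rw [hsup]
    exact le_iSup (fun l => ENNReal.ofReal (a l)) l₀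

theorem stmt_3 (f : ℝ → ℝ) (hfm : Measurable f) (hfnn : ∀ φ, 0 ≤ f φ)
    (hfint : Integrable f) (hf1 : ∫ φ, f φ = 1)
    (h : ℝ) (hh : 0 < h)
    (hsum : ∀ᵐ φ : ℝ, Summable (fun l : ℤ => f (φ + l * h))) :
    1 - ∫ φ in (0:ℝ)..h, ⨆ l : ℤ, f (φ + l * h) ≥
      ∫ φ : ℝ, min (f φ) (f (φ + h)) := by
  set gmin : ℝ → ℝ := fun x => min (f x) (f (x + h)) with hgmin
  have hgminm : Measurable gmin := hfm.min (hfm.comp (measurable_add_const h))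
  have hgminnn : ∀ x, 0 ≤ gmin x := fun x => le_min (hfnn x) (hfnn (x+h))
  set B : ℝ≥0∞ := ∫⁻ x, ENNReal.ofReal (gmin x) with hB
  set G : ℝ → ℝ≥0∞ := fun x => ⨆ l : ℤ, ENNReal.ofReal (f (x + l * h)) with hG
  have hGm : Measurable G :=
    Measurable.iSup fun l => ENNReal.measurable_ofReal.comp (hfm.comp (measurable_add_const _))
  set A : ℝ≥0∞ := ∫⁻ x in Ioc (0:ℝ) h, G x with hA
  have htot : ∫⁻ x, ENNReal.ofReal (f x) = 1 := by
    rw [← ofReal_integral_eq_lintegral_ofReal hfint (ae_of_all _ hfnn), hf1, ENNReal.ofReal_one]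
  have hper1 := periodize_aux h hh (fun x => ENNReal.ofReal (f x))
    (ENNReal.measurable_ofReal.comp hfm)
  have hper2 := periodize_aux h hh (fun x => ENNReal.ofReal (gmin x))
    (ENNReal.measurable_ofReal.comp hgminm)
  have hsum' : ∀ᵐ x ∂(volume.restrict (Ioc (0:ℝ) h)),
      Summable fun l : ℤ => f (x + l * h) := ae_restrict_of_ae hsum
  have hkey : A + B ≤ 1 := by
    rw [hA, hB, hper2, ← lintegral_add_left hGm, ← htot, hper1]
    refine lintegral_mono_ae ?_
    filter_upwards [hsum'] with x hx
    have hb := pointwise_bound_aux (fun l : ℤ => f (x + l * h)) (fun l => hfnn _) hx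
    have e1 : G x = ENNReal.ofReal (⨆ l : ℤ, f (x + l * h)) := by
      rw [hG]
      exact ofReal_ciSup_aux _ (fun l => hfnn _) hx
    have e2 : (∑' l : ℤ, ENNReal.ofReal (gmin (x + l * h)))
        = ∑' l : ℤ, ENNReal.ofReal (min (f (x + l * h)) (f (x + ((l + 1 : ℤ) : ℝ) * h))) := by
      refine tsum_congr fun l => ?_
      simp only [hgmin]
      congr 2
      push_cast
      ring
    rw [e1, e2]
    exact hb
  have hAne : A ≠ ⊤ := ne_top_of_le_ne_top ENNReal.one_ne_top (le_trans le_self_add hkey)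
  have hBne : B ≠ ⊤ := ne_top_of_le_ne_top ENNReal.one_ne_top (le_trans le_add_self hkey)
  have hBreal : ∫ φ : ℝ, min (f φ) (f (φ + h)) = B.toReal := by
    rw [hB]
    exact integral_eq_lintegral_of_nonneg_ae (ae_of_all _ hgminnn) hgminm.aestronglyMeasurable
  set sR : ℝ → ℝ := fun x => ⨆ l : ℤ, f (x + l * h) with hsR
  have hsRnn : ∀ x, 0 ≤ sR x := fun x => Real.iSup_nonneg fun l => hfnn _
  have haeeq : (fun x => ENNReal.ofReal (sR x))
      =ᵐ[volume.restrict (Ioc (0:ℝ) h)] G := by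
    filter_upwards [hsum'] with x hx
    rw [hsR, hG]
    exact (ofReal_ciSup_aux _ (fun l => hfnn _) hx).symm
  have hmG : Measurable fun x => (G x).toReal := hGm.ennreal_toReal
  have haeeq2 : sR =ᵐ[volume.restrict (Ioc (0:ℝ) h)] fun x => (G x).toReal := by
    filter_upwards [haeeq] with x hx
    rw [← hx, ENNReal.toReal_ofReal (hsRnn x)]
  have hsR_aesm : AEStronglyMeasurable sR (volume.restrict (Ioc (0:ℝ) h)) :=
    hmG.aestronglyMeasurable.congr haeeq2.symm
  have hSreal : ∫ x in Ioc (0:ℝ) h, sR x = A.toReal := by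
    rw [integral_eq_lintegral_of_nonneg_ae (ae_of_all _ hsRnn) hsR_aesm, hA]
    congr 1
    exact lintegral_congr_ae haeeq
  have hsum_le : A.toReal + B.toReal ≤ 1 := by
    rw [← ENNReal.toReal_add hAne hBne]
    calc (A + B).toReal ≤ (1 : ℝ≥0∞).toReal := ENNReal.toReal_mono ENNReal.one_ne_top hkey
      _ = 1 := by simp
  rw [ge_iff_le, hBreal, intervalIntegral.integral_of_le hh.le]
  have : ∫ x in Ioc (0:ℝ) h, ⨆ l : ℤ, f (x + l * h) = A.toReal := hSreal
  rw [this]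
  linarith
end

section
/- Let f : ℝ → ℝ be a unimodal probability density with mode θ₀, and h > 0. Then ∫_0^h sup_{l∈ℤ} f(φ + lh) dφ = sup_{c∈ℝ} ∫_{c−h/2}^{c+h/2} f(φ) dφ. Consequently the proposed lower bound 1 − ∫_0^h sup_{l∈ℤ} f(φ+lh) dφ equals the minimum h-outage error probability 1 − sup_c ∫_{c−h/2}^{c+h/2} f. -/
/-!
For `u` in the period `[θ₀ - h, θ₀]` the translates `u + l h` lying left of `θ₀` are beaten by
`u`, those right of `θ₀` by `u + h`, so `sup_l f (u + l h) = max (f u) (f (u + h))`. By the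
intermediate value theorem there is a crossing point `t` in that period with `f (t + h) = f t`;
unimodality then makes `f (u + h)` the larger value left of `t` and `f u` the larger one right of
it, so the integral of the periodic supremum over one period is `∫_t^{t+h} f`. Conversely `f` lies
below the periodic supremum, so every window of length `h` carries at most this mass.
-/

open MeasureTheory Filter Set Function

theorem Function.periodic_iSup_comp_add_int_mul {α : Type*} [SupSet α] (f : ℝ → α) (h : ℝ) :
    Periodic (fun φ => ⨆ l : ℤ, f (φ + l * h)) h := by
  refine fun φ => (Equiv.addRight (1 : ℤ)).iSup_congr fun l => congrArg f ?_
  simp only [Equiv.coe_addRight, Int.cast_add, Int.cast_one]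
  ring

section Unimodal

variable {f : ℝ → ℝ} {θ₀ h : ℝ}

theorem MonotoneOn.apply_le_of_antitoneOn (hmono : MonotoneOn f (Iic θ₀))
    (hanti : AntitoneOn f (Ici θ₀)) (x : ℝ) : f x ≤ f θ₀ := by
  rcases le_total x θ₀ with hx | hx
  · exact hmono hx self_mem_Iic hx
  · exact hanti self_mem_Ici hx hx

theorem apply_le_iSup_comp_add_int_mul (hmono : MonotoneOn f (Iic θ₀))
    (hanti : AntitoneOn f (Ici θ₀)) (x : ℝ) : f x ≤ ⨆ l : ℤ, f (x + l * h) := by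
  simpa using le_ciSup (⟨f θ₀, forall_mem_range.2 fun l => hmono.apply_le_of_antitoneOn hanti _⟩ :
    BddAbove (range fun l : ℤ => f (x + l * h))) 0

theorem eqOn_iSup_comp_add_int_mul_max (hmono : MonotoneOn f (Iic θ₀))
    (hanti : AntitoneOn f (Ici θ₀)) (hh : 0 ≤ h) :
    EqOn (fun u => ⨆ l : ℤ, f (u + l * h)) (fun u => max (f u) (f (u + h))) (Icc (θ₀ - h) θ₀) := by
  intro u hu
  have hbound : ∀ l : ℤ, f (u + l * h) ≤ max (f u) (f (u + h)) := by
    intro l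
    rcases le_or_gt l 0 with hl | hl
    · have : (l : ℝ) * h ≤ 0 := mul_nonpos_of_nonpos_of_nonneg (by exact_mod_cast hl) hh
      exact le_max_of_le_left (hmono (mem_Iic.2 (by linarith [hu.2])) (mem_Iic.2 hu.2)
        (by linarith))
    · have : h ≤ (l : ℝ) * h := le_mul_of_one_le_left hh (by exact_mod_cast hl)
      exact le_max_of_le_right (hanti (mem_Ici.2 (by linarith [hu.1]))
        (mem_Ici.2 (by linarith [hu.1])) (by linarith))
  have hbdd : BddAbove (range fun l : ℤ => f (u + l * h)) := ⟨_, forall_mem_range.2 hbound⟩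
  refine le_antisymm (ciSup_le hbound) (max_le ?_ ?_)
  · simpa using le_ciSup hbdd 0
  · simpa using le_ciSup hbdd 1

theorem intervalIntegrable_iSup_comp_add_int_mul (hf : Continuous f)
    (hmono : MonotoneOn f (Iic θ₀)) (hanti : AntitoneOn f (Ici θ₀)) (hh : 0 < h) (a b : ℝ) :
    IntervalIntegrable (fun u => ⨆ l : ℤ, f (u + l * h)) volume a b := by
  refine (periodic_iSup_comp_add_int_mul f h).intervalIntegrable (t := θ₀ - h) hh.ne' ?_ a b
  rw [sub_add_cancel]
  refine ContinuousOn.intervalIntegrable ?_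
  rw [uIcc_of_le (by linarith)]
  exact (hf.max (hf.comp (continuous_add_const h))).continuousOn.congr
    (eqOn_iSup_comp_add_int_mul_max hmono hanti hh.le)

theorem exists_mem_Icc_apply_add_eq (hf : Continuous f) (hmono : MonotoneOn f (Iic θ₀))
    (hanti : AntitoneOn f (Ici θ₀)) (hh : 0 ≤ h) : ∃ t ∈ Icc (θ₀ - h) θ₀, f (t + h) = f t := by
  have hleft : f (θ₀ - h) ≤ f θ₀ :=
    hmono (mem_Iic.2 (by linarith)) self_mem_Iic (by linarith)
  have hright : f (θ₀ + h) ≤ f θ₀ := hanti self_mem_Ici (mem_Ici.2 (by linarith)) (by linarith)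
  have hzero : (0 : ℝ) ∈ Icc (f (θ₀ + h) - f θ₀) (f (θ₀ - h + h) - f (θ₀ - h)) := by
    rw [sub_add_cancel]
    constructor <;> linarith
  obtain ⟨t, ht, hft⟩ := intermediate_value_Icc' (by linarith)
    ((hf.comp (continuous_add_const h)).sub hf).continuousOn hzero
  exact ⟨t, ht, sub_eq_zero.1 hft⟩

theorem integral_max_apply_apply_add_eq (hf : Continuous f) (hmono : MonotoneOn f (Iic θ₀))
    (hanti : AntitoneOn f (Ici θ₀)) {t : ℝ} (ht : t ∈ Icc (θ₀ - h) θ₀) (hft : f (t + h) = f t) :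
    ∫ u in θ₀ - h..θ₀, max (f u) (f (u + h)) = ∫ u in t..t + h, f u := by
  have hmax : Continuous fun u => max (f u) (f (u + h)) :=
    hf.max (hf.comp (continuous_add_const h))
  have hleft : ∫ u in θ₀ - h..t, max (f u) (f (u + h)) = ∫ u in θ₀ - h..t, f (u + h) := by
    refine intervalIntegral.integral_congr fun u hu => max_eq_right ?_
    rw [uIcc_of_le ht.1] at hu
    calc f u ≤ f t := hmono (mem_Iic.2 (hu.2.trans ht.2)) (mem_Iic.2 ht.2) hu.2
      _ = f (t + h) := hft.symm
      _ ≤ f (u + h) := hanti (mem_Ici.2 (by linarith [hu.1])) (mem_Ici.2 (by linarith [ht.1]))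
          (by linarith [hu.2])
  have hright : ∫ u in t..θ₀, max (f u) (f (u + h)) = ∫ u in t..θ₀, f u := by
    refine intervalIntegral.integral_congr fun u hu => max_eq_left ?_
    rw [uIcc_of_le ht.2] at hu
    calc f (u + h) ≤ f (t + h) := hanti (mem_Ici.2 (by linarith [ht.1]))
          (mem_Ici.2 (by linarith [ht.1, hu.1])) (by linarith [hu.1])
      _ = f t := hft
      _ ≤ f u := hmono (mem_Iic.2 (hu.1.trans hu.2)) (mem_Iic.2 hu.2) hu.1
  rw [← intervalIntegral.integral_add_adjacent_intervals (hmax.intervalIntegrable _ t)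
      (hmax.intervalIntegrable t _), hleft, hright, intervalIntegral.integral_comp_add_right,
    sub_add_cancel, add_comm, intervalIntegral.integral_add_adjacent_intervals
      (hf.intervalIntegrable _ _) (hf.intervalIntegrable _ _)]

theorem integral_iSup_comp_add_int_mul (hf : Continuous f) (hmono : MonotoneOn f (Iic θ₀))
    (hanti : AntitoneOn f (Ici θ₀)) (hh : 0 ≤ h) {t : ℝ} (ht : t ∈ Icc (θ₀ - h) θ₀)
    (hft : f (t + h) = f t) (a : ℝ) :
    ∫ u in a..a + h, ⨆ l : ℤ, f (u + l * h) = ∫ u in t..t + h, f u := by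
  rw [(periodic_iSup_comp_add_int_mul f h).intervalIntegral_add_eq a (θ₀ - h), sub_add_cancel,
    intervalIntegral.integral_congr, integral_max_apply_apply_add_eq hf hmono hanti ht hft]
  rw [uIcc_of_le (by linarith)]
  exact eqOn_iSup_comp_add_int_mul_max hmono hanti hh

end Unimodal

theorem stmt_12_general (f : ℝ → ℝ) (hfc : Continuous f) (θ₀ : ℝ)
    (hmono : MonotoneOn f (Set.Iic θ₀)) (hanti : AntitoneOn f (Set.Ici θ₀))
    (h : ℝ) (hh : 0 < h) :
    (∫ φ in (0:ℝ)..h, ⨆ l : ℤ, f (φ + l * h)) =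
      ⨆ c : ℝ, ∫ φ in (c - h / 2)..(c + h / 2), f φ := by
  obtain ⟨t, ht, hft⟩ := exists_mem_Icc_apply_add_eq hfc hmono hanti hh.le
  have hperiod := integral_iSup_comp_add_int_mul hfc hmono hanti hh.le ht hft
  have hwindow : ∀ c, ∫ φ in c - h / 2..c + h / 2, f φ ≤ ∫ φ in t..t + h, f φ := fun c => by
    rw [show c + h / 2 = c - h / 2 + h by ring, ← hperiod (c - h / 2)]
    exact intervalIntegral.integral_mono_on (by linarith) (hfc.intervalIntegrable _ _)
      (intervalIntegrable_iSup_comp_add_int_mul hfc hmono hanti hh _ _)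
      fun x _ => apply_le_iSup_comp_add_int_mul hmono hanti x
  have hattained : ∫ φ in (t + h / 2) - h / 2..(t + h / 2) + h / 2, f φ =
      ∫ φ in t..t + h, f φ := by
    rw [add_sub_cancel_right, add_assoc, add_halves]
  rw [show ∫ φ in (0 : ℝ)..h, ⨆ l : ℤ, f (φ + l * h) = ∫ φ in t..t + h, f φ by
    simpa only [zero_add] using hperiod 0]
  exact (IsGreatest.csSup_eq (s := range fun c : ℝ => ∫ φ in c - h / 2..c + h / 2, f φ)
    ⟨⟨t + h / 2, hattained⟩, forall_mem_range.2 hwindow⟩).symm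

theorem stmt_12 (f : ℝ → ℝ) (hfc : Continuous f) (hfnn : ∀ φ, 0 ≤ f φ)
    (hfint : Integrable f) (hf1 : ∫ φ, f φ = 1) (θ₀ : ℝ)
    (hmono : MonotoneOn f (Set.Iic θ₀)) (hanti : AntitoneOn f (Set.Ici θ₀))
    (htop : Tendsto f atTop (nhds 0)) (hbot : Tendsto f atBot (nhds 0))
    (h : ℝ) (hh : 0 < h)
    (hsum : ∀ᵐ φ : ℝ, Summable (fun l : ℤ => f (φ + l * h))) :
    (∫ φ in (0:ℝ)..h, ⨆ l : ℤ, f (φ + l * h)) =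
      ⨆ c : ℝ, ∫ φ in (c - h / 2)..(c + h / 2), f φ :=
  stmt_12_general f hfc θ₀ hmono hanti h hh
end

section
/- Let g : ℝ → ℝ be measurable, locally integrable, and suppose ∫_{α−h/2}^{α+h/2} g(φ) dφ = ∫_{−h/2}^{h/2} g(φ) dφ for every α ∈ ℝ, where h > 0. Then g is h-periodic almost everywhere: g(φ + h) = g(φ) for a.e. φ ∈ ℝ. -/
/-!
Let `F x = ∫₀ˣ g`. The hypothesis says that `F (x + h) - F x` is a constant, so `F (· + h)`
and `F` have the same derivative wherever they are differentiable. By the Lebesgue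
differentiation theorem `F' = g` almost everywhere, and since translation by `h` preserves
null sets, also `F (· + h)' = g (· + h)` almost everywhere.
-/

open MeasureTheory

theorem MeasureTheory.LocallyIntegrable.intervalIntegrable {E : Type*} [NormedAddCommGroup E]
    {g : ℝ → E} (hg : LocallyIntegrable g) (a b : ℝ) : IntervalIntegrable g volume a b :=
  intervalIntegrable_iff.mpr <|
    (hg.integrableOn_isCompact isCompact_uIcc).mono_set Set.uIoc_subset_uIcc

theorem MeasureTheory.LocallyIntegrable.ae_add_eq_of_integral_add_eq {E : Type*}
    [NormedAddCommGroup E] [NormedSpace ℝ E] [CompleteSpace E] {g : ℝ → E}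
    (hg : LocallyIntegrable g) {h : ℝ} {C : E} (hC : ∀ x, ∫ t in x..x + h, g t = C) :
    ∀ᵐ x, g (x + h) = g x := by
  set F : ℝ → E := fun x => ∫ t in 0..x, g t
  have hF_shift : (fun x => F (x + h)) = fun x => F x + C := by
    funext x
    rw [← hC x, intervalIntegral.integral_add_adjacent_intervals
      (hg.intervalIntegrable 0 x) (hg.intervalIntegrable x (x + h))]
  have hF_deriv : ∀ᵐ x, HasDerivAt F (g x) x := by
    filter_upwards [_root_.LocallyIntegrable.ae_hasDerivAt_integral hg] with x hx using hx 0
  have hF_deriv_shift : ∀ᵐ x, HasDerivAt F (g (x + h)) (x + h) :=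
    (measurePreserving_add_right volume h).quasiMeasurePreserving.ae hF_deriv
  filter_upwards [hF_deriv, hF_deriv_shift] with x hx hxh
  have h₁ : HasDerivAt (fun y => F (y + h)) (g (x + h)) x := hxh.comp_add_const x h
  have h₂ : HasDerivAt (fun y => F (y + h)) (g x) x := hF_shift ▸ hx.add_const C
  exact h₁.unique h₂

theorem stmt_17_general (g : ℝ → ℝ) (hgl : LocallyIntegrable g)
    (h : ℝ)
    (hconst : ∀ α : ℝ,
      (∫ φ in (α - h / 2)..(α + h / 2), g φ) = ∫ φ in (-(h / 2))..(h / 2), g φ) :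
    ∀ᵐ φ : ℝ, g (φ + h) = g φ := by
  refine hgl.ae_add_eq_of_integral_add_eq (C := ∫ φ in (-(h / 2))..(h / 2), g φ) fun x => ?_
  have hα := hconst (x + h / 2)
  rwa [add_sub_cancel_right, add_assoc, add_halves] at hα

theorem stmt_17 (g : ℝ → ℝ) (hgm : Measurable g) (hgl : LocallyIntegrable g)
    (h : ℝ) (hh : 0 < h)
    (hconst : ∀ α : ℝ,
      (∫ φ in (α - h / 2)..(α + h / 2), g φ) = ∫ φ in (-(h / 2))..(h / 2), g φ) :
    ∀ᵐ φ : ℝ, g (φ + h) = g φ :=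
  stmt_17_general g hgl h hconst
end
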